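/- For all n ≥ 1, (ζ∗ζ)(1_n, γ_n) equals the n-th Catalan number C_n = (1/(n+1))·binom(2n,n), i.e., the number of factorizations of (1_n,γ_n) as a product of two disc partitioned permutations equals the number of non-crossing permutations of {1,…,n}. -/

import Mathlib

open Equiv

def orbitSetoid {α : Type*} (π : Equiv.Perm α) : Setoid α where
  r := π.SameCycle
  iseqv := ⟨fun x => Equiv.Perm.SameCycle.refl π x, fun h => h.symm, fun h h' => h.trans h'⟩

noncomputable def cycleCount {n : ℕ} (π : Equiv.Perm (Fin n)) : ℕ :=
  Nat.card (Quotient (orbitSetoid π))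

noncomputable def pLen {n : ℕ} (V : Setoid (Fin n)) : ℤ :=
  (n : ℤ) - Nat.card (Quotient V)

noncomputable def permLen {n : ℕ} (π : Equiv.Perm (Fin n)) : ℤ :=
  (n : ℤ) - cycleCount π

theorem orbitSetoid_mul_le {α : Type*} (π σ : Equiv.Perm α) :
    orbitSetoid (π * σ) ≤ orbitSetoid π ⊔ orbitSetoid σ := by
  set S := orbitSetoid π ⊔ orbitSetoid σ with hS
  have hstep : ∀ x, S x ((π * σ) x) := by
    intro x
    have h1 : S x (σ x) := Setoid.le_def.mp le_sup_right ⟨1, by simp⟩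
    have h2 : S (σ x) (π (σ x)) := Setoid.le_def.mp le_sup_left ⟨1, by simp⟩
    exact S.iseqv.trans h1 h2
  have hpow : ∀ (k : ℤ) (x : α), S x (((π * σ) ^ k) x) := by
    intro k
    induction k using Int.induction_on with
    | zero => intro x; simpa using S.iseqv.refl x
    | succ k ih =>
        intro x
        have h : ((π * σ) ^ ((k : ℤ) + 1)) x = ((π * σ) ^ (k : ℤ)) ((π * σ) x) := by
          rw [zpow_add_one]
          simp [Equiv.Perm.mul_apply]
        rw [h]
        exact S.iseqv.trans (hstep x) (ih ((π * σ) x))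
    | pred k ih =>
        intro x
        have h : ((π * σ) ^ (-(k : ℤ) - 1)) x = ((π * σ) ^ (-(k : ℤ))) ((π * σ)⁻¹ x) := by
          rw [zpow_sub_one]
          simp [Equiv.Perm.mul_apply]
        rw [h]
        have hinv : S x ((π * σ)⁻¹ x) := by
          have h2 := hstep ((π * σ)⁻¹ x)
          simp only [Equiv.Perm.inv_def, Equiv.apply_symm_apply] at h2
          exact S.iseqv.symm h2
        exact S.iseqv.trans hinv (ih ((π * σ)⁻¹ x))
  rw [Setoid.le_def]
  rintro x y ⟨k, hk⟩
  exact hk ▸ hpow k x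

/-- A partitioned permutation: a pair `(𝒱, π)` with `𝒱` a partition of `{1,…,n}`
(encoded as a setoid on `Fin n`) coarser than the orbit partition of `π`. -/
structure PartitionedPerm (n : ℕ) where
  part : Setoid (Fin n)
  perm : Equiv.Perm (Fin n)
  hle : orbitSetoid perm ≤ part

/-- The length `|(𝒱,π)| := 2|𝒱| − |π|` of a partitioned permutation. -/
noncomputable def ppLen {n : ℕ} (a : PartitionedPerm n) : ℤ :=
  2 * pLen a.part - permLen a.perm

/-- The product of partitioned permutations: `(𝒱,π)·(𝒲,σ) = (𝒱∨𝒲, πσ)` if the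
lengths add up, and `0` (here: `none`) otherwise. -/
noncomputable def ppMul {n : ℕ} (a b : PartitionedPerm n) : Option (PartitionedPerm n) :=
  if ppLen a + ppLen b = 2 * pLen (a.part ⊔ b.part) - permLen (a.perm * b.perm)
  then some ⟨a.part ⊔ b.part, a.perm * b.perm,
        le_trans (orbitSetoid_mul_le a.perm b.perm) (sup_le_sup a.hle b.hle)⟩
  else none

/-- The full cycle `γ_n = (1,2,…,n)`. -/
def gammaCycle (n : ℕ) : Equiv.Perm (Fin n) := finRotate n

/-- The permutation `γ_{m,n} = (1,…,m)(m+1,…,m+n)` consisting of two full cycles. -/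
def gammaTwo (m n : ℕ) : Equiv.Perm (Fin (m + n)) :=
  (Equiv.permCongr finSumFinEquiv) (Equiv.sumCongr (finRotate m) (finRotate n))

/-- The partitioned permutation `(1_n, γ_n)`. -/
noncomputable def topGamma (n : ℕ) : PartitionedPerm n :=
  ⟨⊤, gammaCycle n, le_top⟩

/-- The partitioned permutation `(1_{m+n}, γ_{m,n})`. -/
noncomputable def topGammaTwo (m n : ℕ) : PartitionedPerm (m + n) :=
  ⟨⊤, gammaTwo m n, le_top⟩

/-- `π` is a non-crossing permutation of `{1,…,n}`: `|π| + |π⁻¹γ_n| = n − 1`. -/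
def IsNC {n : ℕ} (π : Equiv.Perm (Fin n)) : Prop :=
  permLen π + permLen (π⁻¹ * gammaCycle n) = (n : ℤ) - 1

/-!
Write `|π| = n - #cycles(π)`. Comparing dimensions of spaces of functions constant on cycles gives
`|πρ| ≤ |π| + |ρ|`, with equality only if `0_π ∨ 0_ρ = 0_{πρ}`. Hence the factorizations of
`(1_n, γ_n)` into two disc partitioned permutations are exactly `(0_π, π) · (0_{π⁻¹γ}, π⁻¹γ)` with
`π` non-crossing, i.e. on a geodesic from `1` to `γ`.

Non-crossing permutations satisfy the Catalan recursion. Sort them by `k = π 0 = γ i`. Left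
multiplication by the transposition `(0 k)` cuts `γ` into the cycles `(0 … i)(i+1 … n)`, and it
maps the non-crossing `π` with `π 0 = k` bijectively onto the permutations fixing `0` on a geodesic
to this product, because it shortens `π` exactly as much as `γ`. These split over the two blocks,
and on the first block a permutation fixing `0` lies on a geodesic to `(0 … i)` iff it lies on one
to `(1 … i)`. This leaves `NC(i) × NC(n - i)`.
-/

theorem Nat.card_subtype_eq_sum_card_fiber {X Y : Type*} [Finite X] [Fintype Y] (P : X → Prop)
    (f : X → Y) : Nat.card {x // P x} = ∑ y, Nat.card {x // P x ∧ f x = y} := by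
  rw [← Nat.card_congr (Equiv.sigmaFiberEquiv fun x : {x // P x} => f x), Nat.card_sigma]
  exact Finset.sum_congr rfl fun y _ => Nat.card_congr (subtypeSubtypeEquivSubtypeInter P (f · = y))

theorem val_finRotate {k : ℕ} (x : Fin k) :
    (finRotate k x : ℕ) = if (x : ℕ) + 1 = k then 0 else (x : ℕ) + 1 := by
  obtain _ | k := k
  · exact x.elim0
  · rw [coe_finRotate]
    simp [Fin.ext_iff]

namespace Setoid

variable {α : Type*}

theorem map_of_le_surjective {A B : Setoid α} (h : A ≤ B) : Function.Surjective (map_of_le h) :=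
  Quotient.ind fun x => ⟨Quotient.mk A x, rfl⟩

theorem card_quotient_le_of_le [Finite α] {A B : Setoid α} (h : A ≤ B) :
    Nat.card (Quotient B) ≤ Nat.card (Quotient A) :=
  Nat.card_le_card_of_surjective _ (map_of_le_surjective h)

theorem card_quotient_lt_of_le [Finite α] {A B : Setoid α} (h : A ≤ B) {a b : α}
    (hA : ¬ A a b) (hB : B a b) : Nat.card (Quotient B) < Nat.card (Quotient A) := by
  have := Fintype.ofFinite α
  classical
  simp only [Nat.card_eq_fintype_card]
  refine Fintype.card_lt_of_surjective_not_injective _ (map_of_le_surjective h) fun hinj => hA ?_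
  exact Quotient.exact (@hinj ⟦a⟧ ⟦b⟧ (Quotient.sound hB))

theorem eq_of_le_of_card_quotient_le [Finite α] {A B : Setoid α} (h : A ≤ B)
    (hc : Nat.card (Quotient A) ≤ Nat.card (Quotient B)) : A = B := by
  refine le_antisymm h fun a b hB => ?_
  by_contra hA
  exact (card_quotient_lt_of_le h hA hB).not_ge hc

theorem card_quotient_top {α : Type*} [Nonempty α] :
    Nat.card (Quotient (⊤ : Setoid α)) = 1 :=
  Nat.card_eq_one_iff_unique.mpr ⟨⟨Quotient.ind₂ fun _ _ => Quotient.sound trivial⟩,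
    ⟨⟦Classical.arbitrary α⟧⟩⟩

def invariantFunctions (S : Setoid α) : Submodule ℚ (α → ℚ) :=
  LinearMap.range (LinearMap.funLeft ℚ ℚ (Quotient.mk S))

theorem mem_invariantFunctions {S : Setoid α} {f : α → ℚ} :
    f ∈ invariantFunctions S ↔ ∀ x y, S x y → f x = f y := by
  refine ⟨?_, fun hf => ⟨Quotient.lift f hf, rfl⟩⟩
  rintro ⟨g, rfl⟩ x y hxy
  exact congrArg g (Quotient.sound hxy)

theorem finrank_invariantFunctions [Finite α] (S : Setoid α) :
    Module.finrank ℚ (invariantFunctions S) = Nat.card (Quotient S) := by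
  have := Fintype.ofFinite (Quotient S)
  rw [invariantFunctions, LinearMap.finrank_range_of_inj
      (LinearMap.funLeft_injective_of_surjective _ _ _ Quotient.mk_surjective),
    Module.finrank_fintype_fun_eq_card, Nat.card_eq_fintype_card]

theorem invariantFunctions_sup (A B : Setoid α) :
    invariantFunctions (A ⊔ B) = invariantFunctions A ⊓ invariantFunctions B := by
  ext f
  simp only [Submodule.mem_inf, mem_invariantFunctions]
  refine ⟨fun hf => ⟨fun x y h => hf x y (le_sup_left (a := A) h),
    fun x y h => hf x y (le_sup_right (b := B) h)⟩, fun ⟨hA, hB⟩ x y hxy => ?_⟩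
  rw [sup_eq_eqvGen] at hxy
  induction hxy with
  | rel a b hab => exact hab.elim (hA a b) (hB a b)
  | refl => rfl
  | symm _ _ _ ih => exact ih.symm
  | trans _ _ _ _ _ ih₁ ih₂ => exact ih₁.trans ih₂

/-- Via `dim (U + W) + dim (U ∩ W) = dim U + dim W` for the spaces of invariant functions. -/
theorem card_quotient_add_card_quotient_le [Fintype α] (A B : Setoid α) :
    Nat.card (Quotient A) + Nat.card (Quotient B) ≤
      Fintype.card α + Nat.card (Quotient (A ⊔ B)) := by
  have hdim := Submodule.finrank_sup_add_finrank_inf_eq (invariantFunctions A)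
    (invariantFunctions B)
  have hsup := Submodule.finrank_le (invariantFunctions A ⊔ invariantFunctions B)
  rw [← invariantFunctions_sup, finrank_invariantFunctions, finrank_invariantFunctions,
    finrank_invariantFunctions] at hdim
  rw [Module.finrank_fintype_fun_eq_card] at hsup
  omega

end Setoid

namespace Equiv.Perm

section Geodesic

variable {α : Type*}

theorem orbitSetoid_le_of_forall_rel_apply [Finite α] {S : Setoid α} {τ : Perm α}
    (h : ∀ x, S x (τ x)) : orbitSetoid τ ≤ S := by
  intro x y hxy
  obtain ⟨k, -, rfl⟩ := SameCycle.exists_nat_pow_eq hxy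
  clear hxy
  induction k with
  | zero => exact S.refl x
  | succ k ih => exact S.trans ih (by rw [pow_succ', mul_apply]; exact h _)

theorem orbitSetoid_one : orbitSetoid (1 : Perm α) = ⊥ :=
  Setoid.ext fun _ _ => sameCycle_one

theorem orbitSetoid_permCongr {β : Type*} (e : α ≃ β) (p : Perm α) (x y : α) :
    orbitSetoid (e.permCongr p) (e x) (e y) ↔ orbitSetoid p x y := by
  have hpow (k : ℤ) : (e.permCongr p ^ k) (e x) = e ((p ^ k) x) := by
    rw [← e.permCongrHom_coe, ← map_zpow, e.permCongrHom_coe, permCongr_apply, symm_apply_apply]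
  exact exists_congr fun k => by rw [hpow, e.apply_eq_iff_eq]

variable [Fintype α]

noncomputable def orbitCount (π : Perm α) : ℕ :=
  Nat.card (Quotient (orbitSetoid π))

/-- The minimal number of transpositions whose product is `π`. -/
noncomputable def cayleyLength (π : Perm α) : ℤ :=
  Fintype.card α - orbitCount π

/-- `π` lies on a geodesic from `1` to `γ` in the Cayley graph generated by transpositions. -/
def OnGeodesic (γ π : Perm α) : Prop :=
  cayleyLength π + cayleyLength (π⁻¹ * γ) = cayleyLength γ

theorem cayleyLength_one : cayleyLength (1 : Perm α) = 0 := by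
  rw [cayleyLength, orbitCount, orbitSetoid_one, Nat.card_congr Setoid.quotientBotEquiv,
    Nat.card_eq_fintype_card, sub_self]

theorem cayleyLength_permCongr {β : Type*} [Fintype β] (e : α ≃ β) (p : Perm α) :
    cayleyLength (e.permCongr p) = cayleyLength p := by
  rw [cayleyLength, cayleyLength, orbitCount, orbitCount, Fintype.card_congr e,
    Nat.card_congr (Quotient.congr e fun x y => (orbitSetoid_permCongr e p x y).symm).symm]

theorem cayleyLength_mul_le (π ρ : Perm α) :
    cayleyLength (π * ρ) ≤ cayleyLength π + cayleyLength ρ := by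
  have := Setoid.card_quotient_add_card_quotient_le (orbitSetoid π) (orbitSetoid ρ)
  have := Setoid.card_quotient_le_of_le (orbitSetoid_mul_le π ρ)
  simp only [cayleyLength, orbitCount]
  omega

theorem cayleyLength_le_add_inv_mul (γ π : Perm α) :
    cayleyLength γ ≤ cayleyLength π + cayleyLength (π⁻¹ * γ) := by
  simpa using cayleyLength_mul_le π (π⁻¹ * γ)

theorem orbitSetoid_sup_eq_of_cayleyLength_add {π ρ : Perm α}
    (h : cayleyLength π + cayleyLength ρ = cayleyLength (π * ρ)) :
    orbitSetoid π ⊔ orbitSetoid ρ = orbitSetoid (π * ρ) := by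
  have := Setoid.card_quotient_add_card_quotient_le (orbitSetoid π) (orbitSetoid ρ)
  have := Setoid.card_quotient_le_of_le (orbitSetoid_mul_le π ρ)
  simp only [cayleyLength, orbitCount] at h
  exact (Setoid.eq_of_le_of_card_quotient_le (orbitSetoid_mul_le π ρ) (by omega)).symm

theorem OnGeodesic.orbitSetoid_sup {γ π : Perm α} (h : OnGeodesic γ π) :
    orbitSetoid π ⊔ orbitSetoid (π⁻¹ * γ) = orbitSetoid γ := by
  simpa using orbitSetoid_sup_eq_of_cayleyLength_add (π := π) (ρ := π⁻¹ * γ)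
    (by rwa [mul_inv_cancel_left])

theorem OnGeodesic.orbitSetoid_le {γ π : Perm α} (h : OnGeodesic γ π) :
    orbitSetoid π ≤ orbitSetoid γ :=
  h.orbitSetoid_sup ▸ le_sup_left

theorem onGeodesic_one (γ : Perm α) : OnGeodesic γ 1 := by
  simp [OnGeodesic, cayleyLength_one]

theorem onGeodesic_inv_mul_iff {γ π τ : Perm α} (hγ : OnGeodesic γ τ) (hπ : OnGeodesic π τ) :
    OnGeodesic γ π ↔ OnGeodesic (τ⁻¹ * γ) (τ⁻¹ * π) := by
  have hratio : (τ⁻¹ * π)⁻¹ * (τ⁻¹ * γ) = π⁻¹ * γ := by group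
  simp only [OnGeodesic, hratio] at hγ hπ ⊢
  omega

theorem onGeodesic_permCongr_iff {β : Type*} [Fintype β] (e : α ≃ β) {γ π : Perm α} :
    OnGeodesic (e.permCongr γ) (e.permCongr π) ↔ OnGeodesic γ π := by
  simp only [OnGeodesic, ← e.permCongrHom_coe, ← map_inv, ← map_mul]
  simp only [e.permCongrHom_coe, cayleyLength_permCongr]

theorem card_onGeodesic_permCongr_apply_eq {β : Type*} [Fintype β] (e : α ≃ β) (γ : Perm α)
    (x : α) :
    Nat.card {σ // OnGeodesic (e.permCongr γ) σ ∧ σ (e x) = e x} =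
      Nat.card {π // OnGeodesic γ π ∧ π x = x} := by
  refine (Nat.card_congr (subtypeEquiv e.permCongr fun π => ?_)).symm
  rw [onGeodesic_permCongr_iff, permCongr_apply, symm_apply_apply, e.apply_eq_iff_eq]

end Geodesic

section Swap

variable {α : Type*} [DecidableEq α]

theorem sameCycle_swap_apply_apply (π : Perm α) (x z : α) :
    π.SameCycle z (swap x (π x) z) := by
  rcases eq_or_ne z x with rfl | hzx
  · rw [swap_apply_left]; exact ⟨1, rfl⟩
  rcases eq_or_ne z (π x) with rfl | hz
  · rw [swap_apply_right]; exact ⟨-1, by simp⟩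
  rw [swap_apply_of_ne_of_ne hzx hz]

variable [Fintype α]

theorem cayleyLength_swap_le_one (x y : α) : cayleyLength (swap x y) ≤ 1 := by
  have hinj :
      Function.Injective fun z : {z // z ≠ y} => Quotient.mk (orbitSetoid (swap x y)) z := by
    rintro ⟨z, hz⟩ ⟨w, hw⟩ hzw
    have h : (swap x y).SameCycle z w := Quotient.exact hzw
    by_contra hne
    have hz' : z = x := by
      by_contra hzx
      exact hne (Subtype.ext (h.eq_of_left (swap_apply_of_ne_of_ne hzx hz)))
    have hw' : w = x := by
      by_contra hwx
      exact hne (Subtype.ext (h.eq_of_right (swap_apply_of_ne_of_ne hwx hw)))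
    exact hne (Subtype.ext (hz'.trans hw'.symm))
  have hcard := Nat.card_le_card_of_injective _ hinj
  rw [Nat.card_eq_fintype_card, Fintype.card_subtype_compl, Fintype.card_subtype_eq] at hcard
  rw [cayleyLength, orbitCount]
  omega

/-- Multiplying by the transposition `(x π(x))` cuts the cycle of `x` in two. -/
theorem onGeodesic_swap_apply (π : Perm α) (x : α) : OnGeodesic π (swap x (π x)) := by
  rcases eq_or_ne (π x) x with hx | hx
  · rw [hx, swap_self]; exact onGeodesic_one π
  have hle : orbitSetoid (swap x (π x) * π) ≤ orbitSetoid π :=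
    orbitSetoid_le_of_forall_rel_apply fun z =>
      sameCycle_apply_left.mp (sameCycle_swap_apply_apply π x (π z))
  have hfix : (swap x (π x) * π) x = x := by simp
  have hlt := Setoid.card_quotient_lt_of_le hle (a := x) (b := π x)
    (fun h => hx (SameCycle.eq_of_left h hfix).symm) ⟨1, rfl⟩
  have hsub := cayleyLength_mul_le (swap x (π x)) (swap x (π x) * π)
  rw [swap_mul_self_mul] at hsub
  have hτ := cayleyLength_swap_le_one x (π x)
  rw [OnGeodesic, swap_inv]
  simp only [cayleyLength, orbitCount] at hsub hτ ⊢
  omega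

theorem onGeodesic_swap_of_cayleyLength_swap_mul_lt {γ : Perm α} {x y : α}
    (h : cayleyLength (swap x y * γ) < cayleyLength γ) :
    OnGeodesic γ (swap x y) := by
  have hsub := cayleyLength_le_add_inv_mul γ (swap x y)
  have hτ := cayleyLength_swap_le_one x y
  rw [swap_inv] at hsub
  rw [OnGeodesic, swap_inv]
  omega

theorem card_onGeodesic_apply_eq {γ : Perm α} {x y : α} (hγ : OnGeodesic γ (swap x y)) :
    Nat.card {π // OnGeodesic γ π ∧ π x = y} =
      Nat.card {σ // OnGeodesic (swap x y * γ) σ ∧ σ x = x} := by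
  refine Nat.card_congr (subtypeEquiv (Equiv.mulLeft (swap x y)) fun π => ?_)
  rw [coe_mulLeft, mul_apply, swap_apply_eq_iff, swap_apply_left]
  refine and_congr_left fun hπ => ?_
  have hsplit := onGeodesic_swap_apply π x
  rw [hπ] at hsplit
  simpa only [swap_inv] using onGeodesic_inv_mul_iff hγ hsplit

theorem onGeodesic_swap_mul_iff_of_apply_eq_self {γ π : Perm α} {x : α} (hπ : π x = x) :
    OnGeodesic (swap x (γ x) * γ) π ↔ OnGeodesic γ π := by
  have hconj : swap x ((π⁻¹ * γ) x) = π⁻¹.permCongr (swap x (γ x)) := by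
    rw [permCongr_eq_mul, ← swap_apply_apply, inv_eq_iff_eq.mpr hπ.symm]; rfl
  have hratio : π⁻¹ * (swap x (γ x) * γ) = swap x ((π⁻¹ * γ) x) * (π⁻¹ * γ) := by
    rw [hconj, permCongr_eq_mul]; group
  have hlen : cayleyLength (swap x ((π⁻¹ * γ) x)) = cayleyLength (swap x (γ x)) := by
    rw [hconj, cayleyLength_permCongr]
  have hγ := onGeodesic_swap_apply γ x
  have hρ := onGeodesic_swap_apply (π⁻¹ * γ) x
  simp only [OnGeodesic, swap_inv, hratio] at hγ hρ ⊢
  omega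

end Swap

section SumCongr

open Sum

variable {α β : Type*} {p : Perm α} {q : Perm β}

theorem sumCongr_zpow (p : Perm α) (q : Perm β) (k : ℤ) :
    sumCongr p q ^ k = sumCongr (p ^ k) (q ^ k) :=
  (map_zpow (sumCongrHom α β) (p, q) k).symm

theorem sameCycle_sumCongr_inl {a a' : α} :
    (sumCongr p q).SameCycle (inl a) (inl a') ↔ p.SameCycle a a' := by
  simp [SameCycle, sumCongr_zpow]

theorem sameCycle_sumCongr_inr {b b' : β} :
    (sumCongr p q).SameCycle (inr b) (inr b') ↔ q.SameCycle b b' := by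
  simp [SameCycle, sumCongr_zpow]

theorem not_sameCycle_sumCongr_inl_inr {a : α} {b : β} :
    ¬ (sumCongr p q).SameCycle (inl a) (inr b) := by
  simp [SameCycle, sumCongr_zpow]

variable [Fintype α] [Fintype β]

theorem orbitCount_sumCongr (p : Perm α) (q : Perm β) :
    orbitCount (sumCongr p q) = orbitCount p + orbitCount q := by
  let f : Quotient (orbitSetoid p) ⊕ Quotient (orbitSetoid q) →
      Quotient (orbitSetoid (sumCongr p q)) :=
    Sum.elim (Quotient.map' inl fun _ _ => sameCycle_sumCongr_inl.mpr)
      (Quotient.map' inr fun _ _ => sameCycle_sumCongr_inr.mpr)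
  have hf : Function.Bijective f := by
    refine ⟨?_, ?_⟩
    · rintro (x | x) (y | y) h <;> obtain ⟨x, rfl⟩ := Quotient.mk_surjective x <;>
        obtain ⟨y, rfl⟩ := Quotient.mk_surjective y <;> have h' := Quotient.exact h
      · exact congrArg inl (Quotient.sound (sameCycle_sumCongr_inl.mp h'))
      · exact (not_sameCycle_sumCongr_inl_inr h').elim
      · exact (not_sameCycle_sumCongr_inl_inr h'.symm).elim
      · exact congrArg inr (Quotient.sound (sameCycle_sumCongr_inr.mp h'))
    · rintro ⟨a | b⟩
      exacts [⟨inl ⟦a⟧, rfl⟩, ⟨inr ⟦b⟧, rfl⟩]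
  rw [orbitCount, ← Nat.card_eq_of_bijective f hf, Nat.card_sum]
  rfl

theorem cayleyLength_sumCongr (p : Perm α) (q : Perm β) :
    cayleyLength (sumCongr p q) = cayleyLength p + cayleyLength q := by
  simp only [cayleyLength, orbitCount_sumCongr, Fintype.card_sum]
  push_cast
  ring

theorem onGeodesic_sumCongr_iff {γ₁ : Perm α} {γ₂ : Perm β} :
    OnGeodesic (sumCongr γ₁ γ₂) (sumCongr p q) ↔ OnGeodesic γ₁ p ∧ OnGeodesic γ₂ q := by
  have h₁ := cayleyLength_le_add_inv_mul γ₁ p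
  have h₂ := cayleyLength_le_add_inv_mul γ₂ q
  simp only [OnGeodesic, sumCongr_inv, sumCongr_mul, cayleyLength_sumCongr]
  omega

theorem OnGeodesic.mem_sumCongrHom_range {γ₁ : Perm α} {γ₂ : Perm β} {π : Perm (α ⊕ β)}
    (h : OnGeodesic (sumCongr γ₁ γ₂) π) : π ∈ (sumCongrHom α β).range := by
  refine mem_sumCongrHom_range_of_perm_mapsTo_inl ?_
  rintro _ ⟨a, rfl⟩
  have hcycle : (sumCongr γ₁ γ₂).SameCycle (inl a) (π (inl a)) := h.orbitSetoid_le ⟨1, rfl⟩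
  rcases hπ : π (inl a) with a' | b
  · exact ⟨a', rfl⟩
  · exact (not_sameCycle_sumCongr_inl_inr (hπ ▸ hcycle)).elim

theorem card_onGeodesic_sumCongr_apply_inl (γ₁ : Perm α) (γ₂ : Perm β) (a : α) :
    Nat.card {π // OnGeodesic (sumCongr γ₁ γ₂) π ∧ π (inl a) = inl a} =
      Nat.card {p // OnGeodesic γ₁ p ∧ p a = a} * Nat.card {q // OnGeodesic γ₂ q} := by
  have hpred (x : Perm α × Perm β) :
      (OnGeodesic (sumCongr γ₁ γ₂) (sumCongrHom α β x) ∧ sumCongrHom α β x (inl a) = inl a) ↔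
        (OnGeodesic γ₁ x.1 ∧ x.1 a = a) ∧ OnGeodesic γ₂ x.2 := by
    simp only [sumCongrHom_apply, onGeodesic_sumCongr_iff, sumCongr_apply, map_inl, inl.injEq]
    tauto
  rw [← Nat.card_prod, ← Nat.card_congr subtypeProdEquivProd]
  refine (Nat.card_eq_of_bijective (fun x => ⟨sumCongrHom α β x.1, (hpred x.1).mpr x.2⟩)
    ⟨fun x y hxy => Subtype.ext (sumCongrHom_injective (congrArg Subtype.val hxy)), ?_⟩).symm
  rintro ⟨π, hπ⟩
  obtain ⟨x, rfl⟩ := hπ.1.mem_sumCongrHom_range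
  exact ⟨⟨x, (hpred x).mp hπ⟩, rfl⟩

end SumCongr

theorem orbitSetoid_finRotate (n : ℕ) : orbitSetoid (finRotate n) = ⊤ := by
  refine eq_top_iff.mpr fun x y _ => ?_
  match n with
  | 0 | 1 => exact Subsingleton.elim x y ▸ SameCycle.refl _ _
  | _ + 2 =>
    exact isCycle_finRotate.sameCycle (mem_support.mp (by simp [support_finRotate]))
      (mem_support.mp (by simp [support_finRotate]))

theorem cayleyLength_finRotate {m : ℕ} (hm : 0 < m) : cayleyLength (finRotate m) = m - 1 := by
  have := Fin.pos_iff_nonempty.mp hm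
  rw [cayleyLength, orbitCount, orbitSetoid_finRotate, Setoid.card_quotient_top, Fintype.card_fin,
    Nat.cast_one]

/-- `Fin (n + 1)` cut after `i` into the blocks `{0, …, i}` and `{i + 1, …, n}`. -/
def splitEquiv {n : ℕ} (i : Fin (n + 1)) : Fin (i + 1) ⊕ Fin (n - i) ≃ Fin (n + 1) :=
  finSumFinEquiv.trans (finCongr (by omega))

@[simp] theorem val_splitEquiv_inl {n : ℕ} (i : Fin (n + 1)) (j : Fin (i + 1)) :
    (splitEquiv i (.inl j) : ℕ) = j := by
  simp [splitEquiv]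

@[simp] theorem val_splitEquiv_inr {n : ℕ} (i : Fin (n + 1)) (j : Fin (n - i)) :
    (splitEquiv i (.inr j) : ℕ) = i + 1 + j := by
  simp [splitEquiv]

theorem swap_mul_finRotate (n : ℕ) (i : Fin (n + 1)) :
    swap 0 (finRotate (n + 1) i) * finRotate (n + 1) =
      (splitEquiv i).permCongr (sumCongr (finRotate (i + 1)) (finRotate (n - i))) := by
  have hi := i.isLt
  ext x
  obtain ⟨j | j, rfl⟩ := (splitEquiv i).surjective x
  all_goals
    have hj := j.isLt
    rw [permCongr_apply, symm_apply_apply, mul_apply, sumCongr_apply]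
    simp only [Sum.map_inl, Sum.map_inr, swap_apply_def, Fin.ext_iff, apply_ite Fin.val,
      val_finRotate, val_splitEquiv_inl, val_splitEquiv_inr, Fin.val_zero]
    split_ifs <;> first | omega | contradiction

theorem onGeodesic_finRotate_swap_zero (n : ℕ) (i : Fin (n + 1)) :
    OnGeodesic (finRotate (n + 1)) (swap 0 (finRotate (n + 1) i)) := by
  rcases eq_or_ne i (Fin.last n) with rfl | hi
  · rw [finRotate_last, swap_self]
    exact onGeodesic_one _
  have hi' : (i : ℕ) < n := Fin.val_lt_last hi
  refine onGeodesic_swap_of_cayleyLength_swap_mul_lt ?_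
  rw [swap_mul_finRotate, cayleyLength_permCongr, cayleyLength_sumCongr,
    cayleyLength_finRotate (by omega), cayleyLength_finRotate (by omega),
    cayleyLength_finRotate (by omega)]
  omega

noncomputable def ncCount (n : ℕ) : ℕ :=
  Nat.card {π : Perm (Fin n) // OnGeodesic (finRotate n) π}

noncomputable def ncFixCount (n : ℕ) : ℕ :=
  Nat.card {π : Perm (Fin (n + 1)) // OnGeodesic (finRotate (n + 1)) π ∧ π 0 = 0}

theorem ncCount_zero : ncCount 0 = 1 :=
  Nat.card_eq_one_iff_unique.mpr ⟨inferInstance, ⟨⟨1, onGeodesic_one _⟩⟩⟩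

theorem ncFixCount_zero : ncFixCount 0 = 1 :=
  Nat.card_eq_one_iff_unique.mpr
    ⟨⟨fun _ _ => Subtype.ext (Equiv.ext fun _ => Subsingleton.elim (α := Fin 1) _ _)⟩,
      ⟨⟨1, onGeodesic_one _, rfl⟩⟩⟩

theorem card_onGeodesic_swap_mul_finRotate (n : ℕ) (i : Fin (n + 1)) :
    Nat.card {σ // OnGeodesic (swap 0 (finRotate (n + 1) i) * finRotate (n + 1)) σ ∧ σ 0 = 0} =
      ncFixCount i * ncCount (n - i) := by
  have h0 : splitEquiv i (.inl 0) = 0 := Fin.ext (val_splitEquiv_inl i 0)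
  rw [swap_mul_finRotate, ← h0, card_onGeodesic_permCongr_apply_eq,
    card_onGeodesic_sumCongr_apply_inl]
  rfl

theorem card_onGeodesic_finRotate_apply_zero (n : ℕ) (i : Fin (n + 1)) :
    Nat.card {π // OnGeodesic (finRotate (n + 1)) π ∧ π 0 = finRotate (n + 1) i} =
      ncFixCount i * ncCount (n - i) := by
  rw [card_onGeodesic_apply_eq (onGeodesic_finRotate_swap_zero n i),
    card_onGeodesic_swap_mul_finRotate]

theorem ncFixCount_eq_ncCount (n : ℕ) : ncFixCount n = ncCount n := by
  obtain _ | m := n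
  · rw [ncFixCount_zero, ncCount_zero]
  have hfix : ncFixCount (m + 1) = Nat.card {σ // OnGeodesic (swap 0 (finRotate (m + 2) 0) *
      finRotate (m + 2)) σ ∧ σ 0 = 0} :=
    Nat.card_congr (subtypeEquivRight fun π =>
      and_congr_left fun hπ => (onGeodesic_swap_mul_iff_of_apply_eq_self hπ).symm)
  rw [hfix, card_onGeodesic_swap_mul_finRotate, Fin.val_zero, ncFixCount_zero, one_mul]
  rfl

theorem ncCount_succ (n : ℕ) :
    ncCount (n + 1) = ∑ i : Fin (n + 1), ncCount i * ncCount (n - i) := by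
  rw [ncCount, Nat.card_subtype_eq_sum_card_fiber _ fun π : Perm (Fin (n + 1)) => π 0,
    ← Equiv.sum_comp (finRotate (n + 1))]
  simp only [card_onGeodesic_finRotate_apply_zero, ncFixCount_eq_ncCount]

theorem ncCount_eq_catalan (n : ℕ) : ncCount n = catalan n := by
  induction n using Nat.strong_induction_on with
  | _ n ih =>
    obtain _ | n := n
    · rw [ncCount_zero, catalan_zero]
    rw [ncCount_succ, catalan_succ]
    exact Finset.sum_congr rfl fun i _ => by
      rw [ih i (by omega), ih (n - i) (by omega)]

end Equiv.Perm

open Equiv.Perm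

theorem permLen_eq_cayleyLength {n : ℕ} (π : Perm (Fin n)) : permLen π = cayleyLength π := by
  rw [permLen, cayleyLength, Fintype.card_fin]
  rfl

theorem pLen_top {n : ℕ} (hn : 1 ≤ n) : pLen (⊤ : Setoid (Fin n)) = n - 1 := by
  have : Nonempty (Fin n) := Fin.pos_iff_nonempty.mp hn
  rw [pLen, Setoid.card_quotient_top, Nat.cast_one]

theorem isNC_iff_onGeodesic {n : ℕ} (hn : 1 ≤ n) (π : Perm (Fin n)) :
    IsNC π ↔ OnGeodesic (gammaCycle n) π := by
  rw [IsNC, OnGeodesic, permLen_eq_cayleyLength, permLen_eq_cayleyLength, gammaCycle,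
    cayleyLength_finRotate hn]

theorem card_isNC {n : ℕ} (hn : 1 ≤ n) : Nat.card {π : Perm (Fin n) // IsNC π} = catalan n := by
  rw [← ncCount_eq_catalan, ncCount]
  exact Nat.card_congr (subtypeEquivRight (isNC_iff_onGeodesic hn))

namespace PartitionedPerm

variable {n : ℕ}

/-- The disc partitioned permutation `(0_π, π)`. -/
def ofPerm (π : Perm (Fin n)) : PartitionedPerm n :=
  ⟨orbitSetoid π, π, le_rfl⟩

theorem eq_ofPerm {a : PartitionedPerm n} (h : a.part = orbitSetoid a.perm) :
    a = ofPerm a.perm := by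
  obtain ⟨part, perm, hle⟩ := a
  dsimp only at h
  subst h
  rfl

theorem ppLen_ofPerm (π : Perm (Fin n)) : ppLen (ofPerm π) = permLen π := by
  rw [ppLen, ofPerm]
  change 2 * permLen π - permLen π = _
  ring

theorem ppMul_ofPerm_eq_topGamma_iff (hn : 1 ≤ n) (π σ : Perm (Fin n)) :
    ppMul (ofPerm π) (ofPerm σ) = some (topGamma n) ↔ π * σ = gammaCycle n ∧ IsNC π := by
  have hγ : permLen (gammaCycle n) = n - 1 := by
    rw [permLen_eq_cayleyLength, gammaCycle, cayleyLength_finRotate hn]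
  have hNC (hprod : π * σ = gammaCycle n) : IsNC π ↔ permLen π + permLen σ = n - 1 := by
    rw [IsNC, ← hprod, inv_mul_cancel_left]
  have hsup (hprod : π * σ = gammaCycle n) (hπ : IsNC π) : orbitSetoid π ⊔ orbitSetoid σ = ⊤ := by
    have := ((isNC_iff_onGeodesic hn π).mp hπ).orbitSetoid_sup
    rwa [← hprod, inv_mul_cancel_left, hprod, gammaCycle, orbitSetoid_finRotate] at this
  rw [ppMul]
  split_ifs with hcond <;> rw [ppLen_ofPerm, ppLen_ofPerm] at hcond <;>
    simp only [ofPerm, topGamma, Option.some.injEq, mk.injEq, false_iff, not_and] at hcond ⊢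
  · refine ⟨fun ⟨hsup', hprod⟩ => ⟨hprod, (hNC hprod).mpr ?_⟩,
      fun ⟨hprod, hπ⟩ => ⟨hsup hprod hπ, hprod⟩⟩
    rw [hsup', hprod, pLen_top hn, hγ] at hcond
    omega
  · intro hprod hπ
    have := (hNC hprod).mp hπ
    rw [hsup hprod hπ, hprod, pLen_top hn, hγ] at hcond
    omega

end PartitionedPerm

open PartitionedPerm in
theorem card_factorizations_topGamma {n : ℕ} (hn : 1 ≤ n) :
    Nat.card {p : PartitionedPerm n × PartitionedPerm n //
        ppMul p.1 p.2 = some (topGamma n) ∧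
        p.1.part = orbitSetoid p.1.perm ∧ p.2.part = orbitSetoid p.2.perm} =
      Nat.card {π : Perm (Fin n) // IsNC π} := by
  have hfactor (π : Perm (Fin n)) (hπ : IsNC π) :
      ppMul (ofPerm π) (ofPerm (π⁻¹ * gammaCycle n)) = some (topGamma n) :=
    (ppMul_ofPerm_eq_topGamma_iff hn _ _).mpr ⟨mul_inv_cancel_left _ _, hπ⟩
  refine (Nat.card_eq_of_bijective (fun π => ⟨(ofPerm π.1, ofPerm (π.1⁻¹ * gammaCycle n)),
    hfactor π.1 π.2, rfl, rfl⟩) ⟨fun π σ h => Subtype.ext (congrArg (·.1.1.perm) h), ?_⟩).symm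
  rintro ⟨⟨a, b⟩, hab, ha, hb⟩
  dsimp only at hab ha hb
  obtain ⟨hprod, hπ⟩ := (ppMul_ofPerm_eq_topGamma_iff hn a.perm b.perm).mp
    (by rwa [← eq_ofPerm ha, ← eq_ofPerm hb])
  refine ⟨⟨a.perm, hπ⟩, Subtype.ext (Prod.ext (eq_ofPerm ha).symm ?_)⟩
  change ofPerm (a.perm⁻¹ * gammaCycle n) = b
  rw [eq_ofPerm hb, ← hprod, inv_mul_cancel_left]

/-- `(ζ∗ζ)(1_n, γ_n)`, the number of factorizations of `(1_n,γ_n)` into a product of two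
disc partitioned permutations, equals the number of non-crossing permutations of
`{1,…,n}`, which is the `n`-th Catalan number `C_n = (1/(n+1))·binom(2n,n)`. -/
theorem zeta_conv_zeta_topGamma (n : ℕ) (hn : 1 ≤ n) :
    Nat.card {p : PartitionedPerm n × PartitionedPerm n //
        ppMul p.1 p.2 = some (topGamma n) ∧
        p.1.part = orbitSetoid p.1.perm ∧ p.2.part = orbitSetoid p.2.perm} = catalan n ∧
      Nat.card {π : Equiv.Perm (Fin n) // IsNC π} = catalan n :=
  ⟨(card_factorizations_topGamma hn).trans (card_isNC hn), card_isNC hn⟩
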